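/- Let $q \geq 2$, $a_1,\ldots,a_q \in \mathbb{R}$ with $a_1 \neq a_2$, and suppose complex numbers $c_1,\ldots,c_q$ satisfy $c_k = \frac{a_k - a_2}{a_1 - a_2} c_1 + \frac{a_1 - a_k}{a_1 - a_2} c_2$ for all $k$. If additionally for positive reals $\theta_1,\ldots,\theta_q$ we have $\sum_{k=1}^q \frac{\theta_k a_k c_k}{1+a_k^2} = 0$ and $\sum_{k=1}^q \frac{\theta_k c_k}{1+a_k^2} = 0$, then $c_1 = c_2 = \cdots = c_q = 0$. -/
import Mathlib


open Finset

theorem stmt_2 (q : ℕ) (hq : 2 ≤ q) (a : Fin q → ℝ) (θ : Fin q → ℝ)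
    (hθ : ∀ k, 0 < θ k)
    (ha : a ⟨0, by omega⟩ ≠ a ⟨1, by omega⟩) (c : Fin q → ℂ)
    (hc : ∀ k, c k = ((a k - a ⟨1, by omega⟩) / (a ⟨0, by omega⟩ - a ⟨1, by omega⟩) : ℝ) * c ⟨0, by omega⟩
        + ((a ⟨0, by omega⟩ - a k) / (a ⟨0, by omega⟩ - a ⟨1, by omega⟩) : ℝ) * c ⟨1, by omega⟩)
    (h1 : ∑ k, (θ k * a k / (1 + a k ^ 2) : ℝ) * c k = 0)
    (h2 : ∑ k, (θ k / (1 + a k ^ 2) : ℝ) * c k = 0) :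
    ∀ k, c k = 0 := by
  set i0 : Fin q := ⟨0, by omega⟩ with hi0
  set i1 : Fin q := ⟨1, by omega⟩ with hi1
  set w : Fin q → ℝ := fun k => θ k / (1 + a k ^ 2) with hw_def
  have hw : ∀ k, 0 < w k := fun k => div_pos (hθ k) (by positivity)
  set d : ℝ := a i0 - a i1 with hd_def
  have hd : d ≠ 0 := sub_ne_zero.mpr ha
  set S0 : ℝ := ∑ k, w k with hS0
  set S1 : ℝ := ∑ k, w k * a k with hS1
  set S2 : ℝ := ∑ k, w k * a k ^ 2 with hS2
  set A : ℝ := ∑ k, θ k * a k / (1 + a k ^ 2) * ((a k - a i1) / d) with hA_def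
  set B : ℝ := ∑ k, θ k * a k / (1 + a k ^ 2) * ((a i0 - a k) / d) with hB_def
  set C : ℝ := ∑ k, θ k / (1 + a k ^ 2) * ((a k - a i1) / d) with hC_def
  set D : ℝ := ∑ k, θ k / (1 + a k ^ 2) * ((a i0 - a k) / d) with hD_def
  -- express A,B,C,D in terms of S0,S1,S2
  have hA : A = (S2 - a i1 * S1) / d := by
    rw [hA_def, hS2, hS1, Finset.mul_sum, ← Finset.sum_sub_distrib, Finset.sum_div]
    exact Finset.sum_congr rfl fun k _ => by simp only [hw_def]; ring
  have hB : B = (a i0 * S1 - S2) / d := by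
    rw [hB_def, hS2, hS1, Finset.mul_sum, ← Finset.sum_sub_distrib, Finset.sum_div]
    exact Finset.sum_congr rfl fun k _ => by simp only [hw_def]; ring
  have hC : C = (S1 - a i1 * S0) / d := by
    rw [hC_def, hS1, hS0, Finset.mul_sum, ← Finset.sum_sub_distrib, Finset.sum_div]
    exact Finset.sum_congr rfl fun k _ => by simp only [hw_def]; ring
  have hD : D = (a i0 * S0 - S1) / d := by
    rw [hD_def, hS1, hS0, Finset.mul_sum, ← Finset.sum_sub_distrib, Finset.sum_div]
    exact Finset.sum_congr rfl fun k _ => by simp only [hw_def]; ring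
  -- positivity of S0*S2 - S1^2
  have e0 : S0 * S2 = ∑ i, ∑ j, w i * (w j * a j ^ 2) := by
    rw [hS0, hS2, Finset.sum_mul_sum]
  have e1 : S1 * S1 = ∑ i, ∑ j, (w i * a i) * (w j * a j) := by
    rw [hS1, Finset.sum_mul_sum]
  have e2 : S2 * S0 = ∑ i, ∑ j, (w i * a i ^ 2) * w j := by
    rw [hS2, hS0, Finset.sum_mul_sum]
  have hkey : 2 * (S0 * S2 - S1 ^ 2) = ∑ i, ∑ j, w i * w j * (a i - a j) ^ 2 := by
    have : 2 * (S0 * S2 - S1 ^ 2) = S0 * S2 + S2 * S0 - 2 * (S1 * S1) := by ring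
    rw [this, e0, e1, e2, ← Finset.sum_add_distrib, Finset.mul_sum, ← Finset.sum_sub_distrib]
    refine Finset.sum_congr rfl fun i _ => ?_
    rw [← Finset.sum_add_distrib, Finset.mul_sum, ← Finset.sum_sub_distrib]
    exact Finset.sum_congr rfl fun j _ => by ring
  have hP : 0 < S0 * S2 - S1 ^ 2 := by
    have hne : a i0 - a i1 ≠ 0 := sub_ne_zero.mpr ha
    have ht : 0 < w i0 * w i1 * (a i0 - a i1) ^ 2 :=
      mul_pos (mul_pos (hw i0) (hw i1)) (pow_two_pos_of_ne_zero hne)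
    have h1' : w i0 * w i1 * (a i0 - a i1) ^ 2 ≤ ∑ j, w i0 * w j * (a i0 - a j) ^ 2 :=
      Finset.single_le_sum (f := fun j => w i0 * w j * (a i0 - a j) ^ 2)
        (fun j _ => mul_nonneg (mul_nonneg (hw i0).le (hw j).le) (sq_nonneg _))
        (Finset.mem_univ i1)
    have h2' : ∑ j, w i0 * w j * (a i0 - a j) ^ 2 ≤ ∑ i, ∑ j, w i * w j * (a i - a j) ^ 2 :=
      Finset.single_le_sum (f := fun i => ∑ j, w i * w j * (a i - a j) ^ 2)
        (fun i _ => Finset.sum_nonneg fun j _ =>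
          mul_nonneg (mul_nonneg (hw i).le (hw j).le) (sq_nonneg _))
        (Finset.mem_univ i0)
    nlinarith [hkey, ht, h1', h2']
  -- rewrite h1, h2 as linear equations in c i0, c i1
  have E1 : (A : ℂ) * c i0 + (B : ℂ) * c i1 = 0 := by
    rw [← h1, hA_def, hB_def]
    push_cast
    rw [Finset.sum_mul, Finset.sum_mul, ← Finset.sum_add_distrib]
    refine Finset.sum_congr rfl fun k _ => ?_
    rw [hc k]
    push_cast
    ring
  have E2 : (C : ℂ) * c i0 + (D : ℂ) * c i1 = 0 := by
    rw [← h2, hC_def, hD_def]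
    push_cast
    rw [Finset.sum_mul, Finset.sum_mul, ← Finset.sum_add_distrib]
    refine Finset.sum_congr rfl fun k _ => ?_
    rw [hc k]
    push_cast
    ring
  have hdet : A * D - B * C ≠ 0 := by
    rw [hA, hB, hC, hD]
    have : (S2 - a i1 * S1) / d * ((a i0 * S0 - S1) / d)
        - (a i0 * S1 - S2) / d * ((S1 - a i1 * S0) / d) = (S0 * S2 - S1 ^ 2) / d := by
      field_simp
      ring
    rw [this]
    exact div_ne_zero (ne_of_gt hP) hd
  have hc0 : c i0 = 0 := by
    have key : ((A * D - B * C : ℝ) : ℂ) * c i0 = 0 := by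
      push_cast
      linear_combination (D : ℂ) * E1 - (B : ℂ) * E2
    have := mul_eq_zero.mp key
    rcases this with h | h
    · exact absurd (by exact_mod_cast h) hdet
    · exact h
  have hc1 : c i1 = 0 := by
    have key : ((A * D - B * C : ℝ) : ℂ) * c i1 = 0 := by
      push_cast
      linear_combination (A : ℂ) * E2 - (C : ℂ) * E1
    rcases mul_eq_zero.mp key with h | h
    · exact absurd (by exact_mod_cast h) hdet
    · exact h
  intro k
  rw [hc k, hc0, hc1, mul_zero, mul_zero, add_zero]
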